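/- Let (V_t)_{t∈[0,τ]} be an adapted RCLL process such that sup_{0≤s≤t≤τ} ‖E_s|V_t − V_{s−}|‖_∞ ≤ B over deterministic times s ≤ t, and sup_{t∈[0,τ]} |V_t − V_{t−}| ≤ C almost surely, for finite constants B, C. Then for every stopping time S ≤ τ one has E_S|V_τ − V_{S−}| ≤ B + C almost surely. -/

import Mathlib

open MeasureTheory ProbabilityTheory Filter Topology Set
open scoped ENNReal NNReal

noncomputable section

/-- Left limit of the path `t ↦ V t ω` at time `s`, with the convention `V_{0-} := V_0`. -/
def llim {Ω : Type*} (V : ℝ → Ω → ℝ) (s : ℝ) (ω : Ω) : ℝ :=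
  if s ≤ 0 then V 0 ω else limUnder (nhdsWithin s (Set.Iio s)) fun t => V t ω

/-- A right-continuous adapted-in-time path structure: right continuous with left limits (RCLL). -/
structure IsRCLL {Ω : Type*} (V : ℝ → Ω → ℝ) : Prop where
  rightCont : ∀ ω t, ContinuousWithinAt (fun u => V u ω) (Set.Ici t) t
  leftLimExists : ∀ ω t, (0:ℝ) < t →
    ∃ l : ℝ, Filter.Tendsto (fun u => V u ω) (nhdsWithin t (Set.Iio t)) (nhds l)

/-- The conditional expectation `E[f | m']` of a (nonnegative) function `f`, realized as an
`ℝ≥0∞`-valued integral against the conditional expectation kernel; this gives an honest meaning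
to `E_{m'} f` even when `f` is not integrable. -/
def condE {Ω : Type*} {mΩ : MeasurableSpace Ω} [StandardBorelSpace Ω]
    (μ : Measure Ω) [IsFiniteMeasure μ] (m' : MeasurableSpace Ω) (f : Ω → ℝ) (ω : Ω) : ℝ≥0∞ :=
  ∫⁻ y, ENNReal.ofReal (f y) ∂(condExpKernel (mΩ := mΩ) μ m' ω)

/-- The modulus of mean oscillation `ρ_{s,t}(V)`: the supremum over all pairs of stopping times
`s ≤ S ≤ T ≤ t` of `‖E_S |V_T - V_{S-}|‖_∞`. -/
def bmoRho {Ω : Type*} {mΩ : MeasurableSpace Ω} [StandardBorelSpace Ω]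
    (μ : Measure Ω) [IsFiniteMeasure μ] (ℱ : Filtration ℝ mΩ) (V : ℝ → Ω → ℝ)
    (s t : ℝ) : ℝ≥0∞ :=
  ⨆ (S : Ω → ℝ) (T : Ω → ℝ) (hS : IsStoppingTime ℱ (fun ω => (S ω : WithTop ℝ)))
      (_ : IsStoppingTime ℱ (fun ω => (T ω : WithTop ℝ)))
    (_ : ∀ ω, s ≤ S ω) (_ : ∀ ω, S ω ≤ T ω) (_ : ∀ ω, T ω ≤ t),
    essSup (condE μ hS.measurableSpace fun y => |V (T y) y - llim V (S y) y|) μ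

/-- `κ_{s,t}(V) = lim_{h ↓ 0} sup { ρ_{u,v}(V) : s ≤ u ≤ v ≤ t, v - u ≤ h }`. -/
def bmoKappa {Ω : Type*} {mΩ : MeasurableSpace Ω} [StandardBorelSpace Ω]
    (μ : Measure Ω) [IsFiniteMeasure μ] (ℱ : Filtration ℝ mΩ) (V : ℝ → Ω → ℝ)
    (s t : ℝ) : ℝ≥0∞ :=
  ⨅ (h : ℝ) (_ : 0 < h),
    ⨆ (u : ℝ) (v : ℝ) (_ : s ≤ u) (_ : u ≤ v) (_ : v ≤ t) (_ : v - u ≤ h),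
      bmoRho μ ℱ V u v

/-- A process of bounded mean oscillation (BMO) on `[0, τ]`. -/
structure IsBMO {Ω : Type*} {mΩ : MeasurableSpace Ω} [StandardBorelSpace Ω]
    (μ : Measure Ω) [IsFiniteMeasure μ] (ℱ : Filtration ℝ mΩ) (τ : ℝ)
    (V : ℝ → Ω → ℝ) : Prop where
  adapted : Adapted ℱ V
  rcll : IsRCLL V
  finite : bmoRho μ ℱ V 0 τ < ⊤

/-- A process of vanishing mean oscillation (VMO) on `[0, τ]`. -/
structure IsVMO {Ω : Type*} {mΩ : MeasurableSpace Ω} [StandardBorelSpace Ω]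
    (μ : Measure Ω) [IsFiniteMeasure μ] (ℱ : Filtration ℝ mΩ) (τ : ℝ)
    (V : ℝ → Ω → ℝ) : Prop where
  bmo : IsBMO μ ℱ τ V
  vanishing : bmoKappa μ ℱ V 0 τ = 0

/-- `w_{s,t}(V) = ([V]_{vmo^{p\text{-}var};[s,t]})^p`, the supremum over all partitions
`s = π_0 ≤ π_1 ≤ ⋯ ≤ π_n = t` of `∑_i ρ_{π_i, π_{i+1}}(V)^p`. -/
def pvarW {Ω : Type*} {mΩ : MeasurableSpace Ω} [StandardBorelSpace Ω]
    (μ : Measure Ω) [IsFiniteMeasure μ] (ℱ : Filtration ℝ mΩ) (V : ℝ → Ω → ℝ)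
    (p : ℝ) (s t : ℝ) : ℝ≥0∞ :=
  ⨆ (n : ℕ) (π : Fin (n + 1) → ℝ) (_ : Monotone π) (_ : π 0 = s) (_ : π (Fin.last n) = t),
    ∑ i : Fin n, bmoRho μ ℱ V (π i.castSucc) (π i.succ) ^ p

/-- A VMO process with modulus of mean oscillation of finite `p`-variation, i.e. `vmo^{p-var}`. -/
structure IsVMOpVar {Ω : Type*} {mΩ : MeasurableSpace Ω} [StandardBorelSpace Ω]
    (μ : Measure Ω) [IsFiniteMeasure μ] (ℱ : Filtration ℝ mΩ) (τ : ℝ) (p : ℝ)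
    (V : ℝ → Ω → ℝ) : Prop where
  vmo : IsVMO μ ℱ τ V
  finiteVar : pvarW μ ℱ V p 0 τ < ⊤

/-- The `vmo^α` seminorm `[V]_{vmo^α;[0,τ]} = sup_{0 ≤ s < t ≤ τ} ρ_{s,t}(V) / (t-s)^α`. -/
def vmoAlphaNorm {Ω : Type*} {mΩ : MeasurableSpace Ω} [StandardBorelSpace Ω]
    (μ : Measure Ω) [IsFiniteMeasure μ] (ℱ : Filtration ℝ mΩ) (τ : ℝ) (α : ℝ)
    (V : ℝ → Ω → ℝ) : ℝ≥0∞ :=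
  ⨆ (s : ℝ) (t : ℝ) (_ : 0 ≤ s) (_ : s < t) (_ : t ≤ τ),
    bmoRho μ ℱ V s t / ENNReal.ofReal ((t - s) ^ α)

/-!
Approximate `S` from above by the discrete stopping times `Sₙ = min τ (dyadicAbove n S)`. On each
event `{Sₙ = r} ∩ A` with `A ∈ ℱ_S`, which lies in `ℱ_r`, the deterministic-time bound applies, so
`∫_A |V_τ - V_{Sₙ-}| ≤ B μ(A)`. As `Sₙ ↓ S` strictly (unless `S = τ`), right continuity gives
`V_{Sₙ-} → V_S`, and `|V_S - V_{S-}| ≤ C`; Fatou's lemma then yields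
`∫_A |V_τ - V_{S-}| ≤ (B + C) μ(A)` for all `A ∈ ℱ_S`, which is the claim for the kernel
conditional expectation `condE`. If `B < 0`, then `ENNReal.ofReal B = 0` and the hypothesis makes
`V` a.s. equal to `V_0` at every rational time of `[0, τ]`, hence `V_τ = V_{S-}` a.s.
-/

section CondExpKernel

variable {Ω : Type*} {m : MeasurableSpace Ω} [mΩ : MeasurableSpace Ω] [StandardBorelSpace Ω]
  {μ : Measure Ω} [IsFiniteMeasure μ]

theorem setLIntegral_lintegral_condExpKernel (hm : m ≤ mΩ) {f : Ω → ℝ≥0∞} (hf : Measurable f)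
    {A : Set Ω} (hA : MeasurableSet[m] A) :
    ∫⁻ ω in A, ∫⁻ y, f y ∂condExpKernel μ m ω ∂μ = ∫⁻ ω in A, f ω ∂μ := by
  have hF : Measurable[m] fun ω => ∫⁻ y, f y ∂condExpKernel μ m ω := hf.lintegral_kernel
  rw [← setLIntegral_trim hm hF hA]
  have h := Measure.setLIntegral_compProd (μ := μ.trim hm) (κ := condExpKernel μ m)
    (hf.comp measurable_snd) hA MeasurableSet.univ
  simp only [Measure.restrict_univ, Function.comp_apply] at h
  have hdiag : Measurable[mΩ, m.prod mΩ] Function.diag := (measurable_id'' hm).prodMk measurable_id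
  rw [← h, compProd_trim_condExpKernel hm, @setLIntegral_map Ω (Ω × Ω) mΩ (m.prod mΩ) μ
    (fun p => f p.2) _ _ (hA.prod MeasurableSet.univ) (hf.comp measurable_snd) hdiag]
  simp [Function.diag]

theorem ae_condE_le_iff (hm : m ≤ mΩ) {f : Ω → ℝ} (hf : Measurable f) {c : ℝ≥0∞} :
    (∀ᵐ ω ∂μ, condE μ m f ω ≤ c) ↔
      ∀ A, MeasurableSet[m] A → ∫⁻ ω in A, ENNReal.ofReal (f ω) ∂μ ≤ c * μ A := by
  have hf' : Measurable fun ω => ENNReal.ofReal (f ω) := hf.ennreal_ofReal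
  constructor
  · intro h A hA
    rw [← setLIntegral_lintegral_condExpKernel hm hf' hA, ← setLIntegral_const]
    exact setLIntegral_mono_ae measurable_const.aemeasurable
      (h.mono fun ω hω _ => hω)
  · intro h
    have hF : Measurable[m] (condE μ m f) := hf'.lintegral_kernel
    refine ae_of_ae_trim hm (ae_le_of_forall_setLIntegral_le_of_sigmaFinite hF fun A hA _ => ?_)
    rw [setLIntegral_trim hm hF hA, setLIntegral_trim hm measurable_const hA, setLIntegral_const]
    exact (setLIntegral_lintegral_condExpKernel hm hf' hA).trans_le (h A hA)

end CondExpKernel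

def dyadicAbove (n : ℕ) (x : ℝ) : ℝ := (⌊2 ^ n * x⌋ + 1) / 2 ^ n

theorem lt_dyadicAbove (n : ℕ) (x : ℝ) : x < dyadicAbove n x := by
  rw [dyadicAbove, lt_div_iff₀ (by positivity), mul_comm]
  exact Int.lt_floor_add_one _

theorem dyadicAbove_le (n : ℕ) (x : ℝ) : dyadicAbove n x ≤ x + (2 ^ n)⁻¹ := by
  rw [dyadicAbove, div_le_iff₀ (by positivity), add_mul, inv_mul_cancel₀ (by positivity), mul_comm]
  gcongr
  exact Int.floor_le _

theorem measurable_dyadicAbove (n : ℕ) : Measurable (dyadicAbove n) := by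
  unfold dyadicAbove
  fun_prop

theorem tendsto_dyadicAbove (x : ℝ) : Tendsto (dyadicAbove · x) atTop (𝓝[>] x) := by
  refine tendsto_nhdsWithin_of_tendsto_nhds_of_eventually_within _ ?_
    (Eventually.of_forall (lt_dyadicAbove · x))
  have h : Tendsto (fun n : ℕ => x + (2 ^ n : ℝ)⁻¹) atTop (𝓝 x) := by
    simpa using tendsto_const_nhds.add (tendsto_inv_atTop_zero.comp
      (tendsto_pow_atTop_atTop_of_one_lt (one_lt_two (α := ℝ))))
  exact tendsto_of_tendsto_of_tendsto_of_le_of_le tendsto_const_nhds h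
    (fun n => (lt_dyadicAbove n x).le) (dyadicAbove_le · x)

theorem eq_of_tendsto_nhdsLT_of_eq_on_rat {f : ℝ → ℝ} {a s l c : ℝ} (has : a < s)
    (hf : Tendsto f (𝓝[<] s) (𝓝 l)) (hq : ∀ q : ℚ, a < q → (q : ℝ) < s → f q = c) : l = c := by
  set D := Ioo a s ∩ range ((↑) : ℚ → ℝ)
  have hsD : s ∈ closure D := by
    have h := closure_mono
      (Rat.denseRange_cast.open_subset_closure_inter (isOpen_Ioo (a := a) (b := s)))
    rw [closure_closure, closure_Ioo has.ne] at h
    exact h (right_mem_Icc.2 has.le)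
  have := mem_closure_iff_nhdsWithin_neBot.1 hsD
  refine tendsto_nhds_unique (hf.mono_left (nhdsWithin_mono _ fun x (hx : x ∈ D) => hx.1.2))
    (tendsto_const_nhds.congr' (eventually_nhdsWithin_of_forall ?_))
  rintro _ ⟨hx, q, rfl⟩
  exact (hq q hx.1 hx.2).symm

section Paths

variable {Ω : Type*} {V : ℝ → Ω → ℝ}

theorem llim_eq_of_tendsto {s l : ℝ} {ω : Ω} (hs : 0 < s)
    (h : Tendsto (V · ω) (𝓝[<] s) (𝓝 l)) : llim V s ω = l := by
  rw [llim, if_neg hs.not_ge]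
  exact h.limUnder_eq

theorem IsRCLL.tendsto_llim_nhdsGT (hV : IsRCLL V) (ω : Ω) {s : ℝ} (hs : 0 ≤ s) :
    Tendsto (llim V · ω) (𝓝[>] s) (𝓝 (V s ω)) := by
  refine (closed_nhds_basis (V s ω)).tendsto_right_iff.2 fun N ⟨hN, hNc⟩ => ?_
  obtain ⟨b, hsb, hb⟩ := mem_nhdsGE_iff_exists_Ico_subset.1 ((hV.rightCont ω s).tendsto hN)
  filter_upwards [Ioo_mem_nhdsGT hsb] with u hu
  obtain ⟨l, hl⟩ := hV.leftLimExists ω u (hs.trans_lt hu.1)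
  rw [llim_eq_of_tendsto (hs.trans_lt hu.1) hl]
  refine hNc.mem_of_tendsto hl ?_
  filter_upwards [Ioo_mem_nhdsLT hu.1] with r hr
  exact hb ⟨hr.1.le, hr.2.trans hu.2⟩

theorem measurable_uncurry_of_continuousWithinAt_Ici [MeasurableSpace Ω]
    (hV : ∀ t, Measurable (V t)) (hrc : ∀ ω t, ContinuousWithinAt (V · ω) (Ici t) t) :
    Measurable (Function.uncurry V) := by
  refine measurable_of_tendsto_metrizable (f := fun n p => V (dyadicAbove n p.1) p.2)
    (fun n => ?_) (tendsto_pi_nhds.2 fun p => ?_)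
  · have h : Measurable fun q : Ω × ℤ => V ((q.2 + 1) / 2 ^ n) q.1 :=
      measurable_from_prod_countable_left fun k => hV ((k + 1) / 2 ^ n)
    exact h.comp (measurable_snd.prodMk (Int.measurable_floor.comp (measurable_fst.const_mul _)))
  · exact (hrc p.2 p.1).tendsto.comp
      ((tendsto_dyadicAbove p.1).mono_right (nhdsWithin_mono _ Ioi_subset_Ici_self))

theorem IsRCLL.measurable_llim_comp [MeasurableSpace Ω] (hV : IsRCLL V)
    (hVm : ∀ t, Measurable (V t)) {R : Ω → ℝ} (hR : Measurable R) :
    Measurable fun ω => llim V (R ω) ω := by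
  have hunc := measurable_uncurry_of_continuousWithinAt_Ici hVm hV.rightCont
  refine measurable_of_tendsto_metrizable
    (f := fun n ω => if R ω ≤ 0 then V 0 ω else V (R ω - 1 / ((n : ℝ) + 1)) ω)
    (fun n => Measurable.ite (measurableSet_le hR measurable_const) (hVm 0)
      (hunc.comp ((hR.sub measurable_const).prodMk measurable_id)))
    (tendsto_pi_nhds.2 fun ω => ?_)
  by_cases hω : R ω ≤ 0
  · simp [hω, llim]
  obtain ⟨l, hl⟩ := hV.leftLimExists ω (R ω) (not_le.1 hω)
  simp only [hω, if_false, llim_eq_of_tendsto (not_le.1 hω) hl]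
  refine hl.comp (tendsto_nhdsWithin_of_tendsto_nhds_of_eventually_within _ ?_
    (Eventually.of_forall fun n => sub_lt_self (R ω) Nat.one_div_pos_of_nat))
  simpa using tendsto_const_nhds.sub (tendsto_one_div_add_atTop_nhds_zero_nat (𝕜 := ℝ))

theorem IsRCLL.measurable_abs_sub_llim [MeasurableSpace Ω] (hV : IsRCLL V)
    (hVm : ∀ t, Measurable (V t)) (t : ℝ) {R : Ω → ℝ} (hR : Measurable R) :
    Measurable fun ω => |V t ω - llim V (R ω) ω| :=
  ((hVm t).sub (hV.measurable_llim_comp hVm hR)).abs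

theorem IsRCLL.ofReal_abs_sub_llim_le_add_liminf (hV : IsRCLL V) (ω : Ω) {s : ℝ} (hs : 0 ≤ s)
    {u : ℕ → ℝ} (hu : Tendsto u atTop (𝓝[>] s)) (x : ℝ) :
    ENNReal.ofReal |x - llim V s ω| ≤ ENNReal.ofReal |V s ω - llim V s ω|
      + liminf (fun n => ENNReal.ofReal |x - llim V (u n) ω|) atTop := by
  have hlim : Tendsto (fun n => ENNReal.ofReal |x - llim V (u n) ω|) atTop
      (𝓝 (ENNReal.ofReal |x - V s ω|)) :=
    ENNReal.tendsto_ofReal (tendsto_const_nhds.sub ((hV.tendsto_llim_nhdsGT ω hs).comp hu)).abs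
  rw [hlim.liminf_eq, ← ENNReal.ofReal_add (abs_nonneg _) (abs_nonneg _)]
  exact ENNReal.ofReal_le_ofReal ((abs_sub_le _ _ _).trans_eq (add_comm _ _))

theorem ae_forall_llim_eq_of_ae_eq_const [MeasurableSpace Ω] {μ : Measure Ω}
    (hll : ∀ ω t, 0 < t → ∃ l, Tendsto (V · ω) (𝓝[<] t) (𝓝 l)) {τ : ℝ}
    (hconst : ∀ t ∈ Icc 0 τ, V t =ᵐ[μ] V 0) :
    ∀ᵐ ω ∂μ, ∀ s ∈ Icc 0 τ, llim V s ω = V 0 ω := by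
  have hrat : ∀ᵐ ω ∂μ, ∀ q : ℚ, (q : ℝ) ∈ Icc 0 τ → V q ω = V 0 ω := by
    refine ae_all_iff.2 fun q => ?_
    by_cases hq : (q : ℝ) ∈ Icc 0 τ
    · filter_upwards [hconst q hq] with ω hω _ using hω
    · exact ae_of_all _ fun ω hq' => absurd hq' hq
  filter_upwards [hrat] with ω hω s hs
  rcases hs.1.eq_or_lt with rfl | hpos
  · simp [llim]
  obtain ⟨l, hl⟩ := hll ω s hpos
  rw [llim_eq_of_tendsto hpos hl]
  exact eq_of_tendsto_nhdsLT_of_eq_on_rat hpos hl fun q hq0 hqs => hω q ⟨hq0.le, hqs.le.trans hs.2⟩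

end Paths

namespace MeasureTheory.IsStoppingTime

variable {Ω : Type*} {m : MeasurableSpace Ω}

theorem measurableSet_of_subset_le {ι : Type*} [Preorder ι] {f : Filtration ι m}
    {τ : Ω → WithTop ι} (hτ : IsStoppingTime f τ) {A : Set Ω}
    (hA : MeasurableSet[hτ.measurableSpace] A) {i : ι} (hAi : A ⊆ {ω | τ ω ≤ i}) :
    MeasurableSet[f i] A := by
  simpa [inter_eq_left.2 hAi] using hA.2 i

theorem measurable_real {ℱ : Filtration ℝ m} {S : Ω → ℝ}
    (hS : IsStoppingTime ℱ fun ω => (S ω : WithTop ℝ)) : Measurable[hS.measurableSpace] S :=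
  measurable_of_Iic fun x => by
    have h := hS.measurableSet_le' x
    simp only [WithTop.coe_le_coe] at h
    exact h

theorem measurable_real' {ℱ : Filtration ℝ m} {S : Ω → ℝ}
    (hS : IsStoppingTime ℱ fun ω => (S ω : WithTop ℝ)) : Measurable S :=
  hS.measurable_real.mono hS.measurableSpace_le le_rfl

theorem setLIntegral_comp_le_of_countable_range {μ : Measure Ω} {ℱ : Filtration ℝ m} {S : Ω → ℝ}
    (hS : IsStoppingTime ℱ fun ω => (S ω : WithTop ℝ)) {φ : ℝ → ℝ} (hφ : Measurable φ)
    (hφc : (range φ).Countable) (hSφ : ∀ ω, S ω ≤ φ (S ω)) {G : ℝ → Ω → ℝ≥0∞} {c : ℝ≥0∞}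
    (hG : ∀ ω A, MeasurableSet[ℱ (φ (S ω))] A → ∫⁻ y in A, G (φ (S ω)) y ∂μ ≤ c * μ A)
    {A : Set Ω} (hA : MeasurableSet[hS.measurableSpace] A) :
    ∫⁻ ω in A, G (φ (S ω)) ω ∂μ ≤ c * μ A := by
  have : Countable (range (φ ∘ S)) := (hφc.mono (range_comp_subset_range S φ)).to_subtype
  set P : range (φ ∘ S) → Set Ω := fun r => A ∩ {ω | φ (S ω) = r}
  have hPS : ∀ r, MeasurableSet[hS.measurableSpace] (P r) := fun r =>
    hA.inter (hφ.comp hS.measurable_real (measurableSet_singleton _))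
  have hPm : ∀ r, MeasurableSet (P r) := fun r => hS.measurableSpace_le _ (hPS r)
  have hdisj : Pairwise (Function.onFun Disjoint P) := fun r r' hrr' =>
    disjoint_left.2 fun ω hω hω' => hrr' (Subtype.ext (hω.2.symm.trans hω'.2))
  have hcover : A = ⋃ r, P r := by
    ext ω
    simp only [P, mem_iUnion, mem_inter_iff, mem_ofPred_eq]
    exact ⟨fun hω => ⟨⟨_, ω, rfl⟩, hω, rfl⟩, fun ⟨_, hω, _⟩ => hω⟩
  have hpiece : ∀ r, ∫⁻ ω in P r, G (φ (S ω)) ω ∂μ ≤ c * μ (P r) := by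
    rintro ⟨_, ω₀, rfl⟩
    have hle : P ⟨_, ω₀, rfl⟩ ⊆ {ω | (S ω : WithTop ℝ) ≤ (φ (S ω₀) : ℝ)} := fun ω hω =>
      WithTop.coe_le_coe.2 ((hSφ ω).trans_eq hω.2)
    rw [setLIntegral_congr_fun (hPm _) fun ω hω => by rw [hω.2]]
    exact hG ω₀ _ (hS.measurableSet_of_subset_le (hPS _) hle)
  calc ∫⁻ ω in A, G (φ (S ω)) ω ∂μ = ∑' r, ∫⁻ ω in P r, G (φ (S ω)) ω ∂μ := by
        rw [← lintegral_iUnion hPm hdisj, ← hcover]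
    _ ≤ ∑' r, c * μ (P r) := ENNReal.tsum_le_tsum hpiece
    _ = c * μ A := by rw [ENNReal.tsum_mul_left, ← measure_iUnion hdisj hPm, ← hcover]

end MeasureTheory.IsStoppingTime

theorem IsRCLL.setLIntegral_abs_sub_llim_le {Ω : Type*} [mΩ : MeasurableSpace Ω] {μ : Measure Ω}
    {ℱ : Filtration ℝ mΩ} {V : ℝ → Ω → ℝ} (hV : IsRCLL V) (hVm : ∀ t, Measurable (V t))
    {τ : ℝ} {S : Ω → ℝ} (hS : IsStoppingTime ℱ fun ω => (S ω : WithTop ℝ))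
    (hS0 : ∀ ω, 0 ≤ S ω) (hSτ : ∀ ω, S ω ≤ τ) {b : ℝ≥0∞} {C : ℝ}
    (hB : ∀ s, 0 ≤ s → s ≤ τ → ∀ A, MeasurableSet[ℱ s] A →
      ∫⁻ ω in A, ENNReal.ofReal |V τ ω - llim V s ω| ∂μ ≤ b * μ A)
    (hC : ∀ᵐ ω ∂μ, |V (S ω) ω - llim V (S ω) ω| ≤ C)
    {A : Set Ω} (hA : MeasurableSet[hS.measurableSpace] A) :
    ∫⁻ ω in A, ENNReal.ofReal |V τ ω - llim V (S ω) ω| ∂μ ≤ (b + ENNReal.ofReal C) * μ A := by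
  set S' : ℕ → Ω → ℝ := fun n ω => min τ (dyadicAbove n (S ω))
  set g : ℕ → Ω → ℝ≥0∞ := fun n ω => ENNReal.ofReal |V τ ω - llim V (S' n ω) ω|
  have hgm : ∀ n, Measurable (g n) := fun n =>
    (hV.measurable_abs_sub_llim hVm τ
      (measurable_const.min ((measurable_dyadicAbove n).comp hS.measurable_real'))).ennreal_ofReal
  have hgA : ∀ n, ∫⁻ ω in A, g n ω ∂μ ≤ b * μ A := fun n =>
    hS.setLIntegral_comp_le_of_countable_range (φ := fun x => min τ (dyadicAbove n x))
      (measurable_const.min (measurable_dyadicAbove n))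
      ((countable_range fun k : ℤ => min τ ((k + 1) / 2 ^ n)).mono
        (by rintro _ ⟨x, rfl⟩; exact ⟨⌊2 ^ n * x⌋, rfl⟩))
      (fun ω => le_min (hSτ ω) (lt_dyadicAbove n _).le)
      (G := fun s ω => ENNReal.ofReal |V τ ω - llim V s ω|)
      (fun ω => hB _ ((hS0 ω).trans (le_min (hSτ ω) (lt_dyadicAbove n _).le)) (min_le_left _ _))
      hA
  have hpt : ∀ᵐ ω ∂μ, ENNReal.ofReal |V τ ω - llim V (S ω) ω|
      ≤ ENNReal.ofReal C + liminf (g · ω) atTop := by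
    filter_upwards [hC] with ω hω
    rcases (hSτ ω).lt_or_eq with hlt | heq
    · have hS' : Tendsto (S' · ω) atTop (𝓝[>] S ω) := by
        refine tendsto_nhdsWithin_iff.2 ⟨?_, Eventually.of_forall fun n =>
          lt_min hlt (lt_dyadicAbove n _)⟩
        simpa [S', min_eq_right hlt.le] using (tendsto_const_nhds (x := τ)).min
          ((tendsto_dyadicAbove (S ω)).mono_right nhdsWithin_le_nhds)
      exact (hV.ofReal_abs_sub_llim_le_add_liminf ω (hS0 ω) hS' _).trans
        (add_le_add_left (ENNReal.ofReal_le_ofReal hω) _)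
    · rw [heq] at hω ⊢
      exact (ENNReal.ofReal_le_ofReal hω).trans le_self_add
  calc ∫⁻ ω in A, ENNReal.ofReal |V τ ω - llim V (S ω) ω| ∂μ
      ≤ ∫⁻ ω in A, ENNReal.ofReal C + liminf (g · ω) atTop ∂μ :=
        lintegral_mono_ae (ae_restrict_of_ae hpt)
    _ = ENNReal.ofReal C * μ A + ∫⁻ ω in A, liminf (g · ω) atTop ∂μ := by
        rw [lintegral_add_left measurable_const, setLIntegral_const]
    _ ≤ ENNReal.ofReal C * μ A + liminf (fun n => ∫⁻ ω in A, g n ω ∂μ) atTop := by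
        gcongr
        exact lintegral_liminf_le hgm
    _ ≤ ENNReal.ofReal C * μ A + b * μ A := by
        gcongr
        exact (liminf_le_liminf (Eventually.of_forall hgA)).trans_eq (liminf_const _)
    _ = (b + ENNReal.ofReal C) * μ A := by ring

/-- from deterministic-time mean oscillation bound `B` and a uniform jump
bound `C`, one gets `E_S|V_τ - V_{S-}| ≤ B + C` a.s. for every stopping time `S ≤ τ`. -/
theorem det_to_stopping_single {Ω : Type*} {mΩ : MeasurableSpace Ω} [StandardBorelSpace Ω]
    (μ : Measure Ω) [IsProbabilityMeasure μ] (ℱ : Filtration ℝ mΩ)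
    (τ : ℝ) (hτ : 0 < τ) (V : ℝ → Ω → ℝ)
    (hAd : Adapted ℱ V) (hRCLL : IsRCLL V) (B C : ℝ)
    (hB : ∀ s t : ℝ, 0 ≤ s → s ≤ t → t ≤ τ →
      ∀ᵐ ω ∂μ, condE μ (ℱ s) (fun y => |V t y - llim V s y|) ω ≤ ENNReal.ofReal B)
    (hC : ∀ᵐ ω ∂μ, ∀ t ∈ Set.Icc (0:ℝ) τ, |V t ω - llim V t ω| ≤ C)
    (S : Ω → ℝ) (hS : IsStoppingTime ℱ (fun ω => (S ω : WithTop ℝ))) (hS0 : ∀ ω, 0 ≤ S ω) (hSτ : ∀ ω, S ω ≤ τ) :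
    ∀ᵐ ω ∂μ, condE μ hS.measurableSpace (fun y => |V τ y - llim V (S y) y|) ω
      ≤ ENNReal.ofReal (B + C) := by
  have hVm : ∀ t, Measurable (V t) := fun t => (hAd t).mono (ℱ.le t) le_rfl
  have hB' : ∀ s t, 0 ≤ s → s ≤ t → t ≤ τ → ∀ A, MeasurableSet[ℱ s] A →
      ∫⁻ ω in A, ENNReal.ofReal |V t ω - llim V s ω| ∂μ ≤ ENNReal.ofReal B * μ A :=
    fun s t hs hst htτ => (ae_condE_le_iff (ℱ.le s)
      (hRCLL.measurable_abs_sub_llim hVm t measurable_const)).1 (hB s t hs hst htτ)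
  rw [ae_condE_le_iff hS.measurableSpace_le
    (hRCLL.measurable_abs_sub_llim hVm τ hS.measurable_real')]
  intro A hA
  rcases le_or_gt 0 B with hB0 | hB0
  · obtain ⟨ω₀, hω₀⟩ := hC.exists
    have hC0 : 0 ≤ C := (abs_nonneg _).trans (hω₀ 0 ⟨le_rfl, hτ.le⟩)
    rw [ENNReal.ofReal_add hB0 hC0]
    exact hRCLL.setLIntegral_abs_sub_llim_le hVm hS hS0 hSτ
      (fun s hs hsτ => hB' s τ hs hsτ le_rfl) (hC.mono fun ω hω => hω _ ⟨hS0 ω, hSτ ω⟩) hA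
  · have hconst : ∀ t ∈ Icc 0 τ, V t =ᵐ[μ] V 0 := by
      intro t ht
      have h := hB' 0 t le_rfl ht.1 ht.2 univ MeasurableSet.univ
      rw [ENNReal.ofReal_eq_zero.2 hB0.le, zero_mul, nonpos_iff_eq_zero, Measure.restrict_univ,
        lintegral_eq_zero_iff
          (hRCLL.measurable_abs_sub_llim hVm t measurable_const).ennreal_ofReal] at h
      filter_upwards [h] with ω hω
      simpa [llim, sub_eq_zero] using hω
    have hzero : ∀ᵐ ω ∂μ, ENNReal.ofReal |V τ ω - llim V (S ω) ω| = 0 := by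
      filter_upwards [hconst τ ⟨hτ.le, le_rfl⟩,
        ae_forall_llim_eq_of_ae_eq_const hRCLL.leftLimExists hconst] with ω hτω hω
      simp [hτω, hω (S ω) ⟨hS0 ω, hSτ ω⟩]
    rw [lintegral_congr_ae (ae_restrict_of_ae hzero), lintegral_zero]
    exact zero_le

end
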